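/- With c, Γ, R, Ric, s and the Weyl components W defined from the Heisenberg frame as in the context, the following six equations hold: W 1 2 1 2 + 2·W 1 2 3 4 + W 3 4 3 4 = 0; W 1 3 1 3 − 2·W 1 3 2 4 + W 2 4 2 4 = 0; W 1 4 1 4 + 2·W 1 4 2 3 + W 2 3 2 3 = 0; W 1 2 1 3 − W 1 2 2 4 + W 3 4 1 3 − W 3 4 2 4 = 0; W 1 2 1 4 + W 1 2 2 3 + W 3 4 1 4 + W 3 4 2 3 = 0; W 1 3 1 4 + W 1 3 2 3 − W 2 4 1 4 − W 2 4 2 3 = 0. (These equations express the anti-self-duality condition W⁻₋ = 0 of the real slice of the Ren–Wang spacetime, with the orientation making θ¹∧θ²∧θ⁴∧θ³ positive.) -/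

import Mathlib

open Finset

/-- Commutation coefficients of the standard frame of the 5-dimensional real
Heisenberg group: the only nonzero ones are `c 1 2 0 = 2`, `c 2 1 0 = −2`,
`c 4 3 0 = 2`, `c 3 4 0 = −2`. -/
def heisC (i j k : Fin 5) : ℝ :=
  if i = 1 ∧ j = 2 ∧ k = 0 then 2
  else if i = 2 ∧ j = 1 ∧ k = 0 then -2
  else if i = 4 ∧ j = 3 ∧ k = 0 then 2
  else if i = 3 ∧ j = 4 ∧ k = 0 then -2
  else 0

/-- Christoffel symbols `Γ k i j = ½(c k j i + c k i j + c i j k)`. -/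
noncomputable def heisGamma (k i j : Fin 5) : ℝ :=
  (1 / 2) * (heisC k j i + heisC k i j + heisC i j k)

/-- Curvature components
`R l k i j = Σ_m (Γ m j k·Γ l i m − Γ m i k·Γ l j m) − Σ_m c i j m·Γ l m k`. -/
noncomputable def heisR (l k i j : Fin 5) : ℝ :=
  (∑ m : Fin 5, (heisGamma m j k * heisGamma l i m - heisGamma m i k * heisGamma l j m))
    - ∑ m : Fin 5, heisC i j m * heisGamma l m k

/-- Ricci tensor `Ric i j = Σ_k R i k j k`. -/
noncomputable def heisRic (i j : Fin 5) : ℝ := ∑ k : Fin 5, heisR i k j k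

/-- Scalar curvature. -/
noncomputable def heisS : ℝ := ∑ i : Fin 5, heisRic i i

/-- Kronecker delta on `Fin 5`. -/
def heisDelta (i j : Fin 5) : ℝ := if i = j then 1 else 0

/-- Weyl components
`W i j k l = R i j k l + ⅓(Ric j k·δ i l + Ric i l·δ j k − Ric i k·δ j l − Ric j l·δ i k)
+ (s/12)(δ i k·δ j l − δ i l·δ j k)`. -/
noncomputable def heisW (i j k l : Fin 5) : ℝ :=
  heisR i j k l
    + (1 / 3) * (heisRic j k * heisDelta i l + heisRic i l * heisDelta j k
        - heisRic i k * heisDelta j l - heisRic j l * heisDelta i k)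
    + (heisS / 12) * (heisDelta i k * heisDelta j l - heisDelta i l * heisDelta j k)

/-!
The frame brackets are `[e_i, e_j] = ω_ij e_0` with `ω = 2(e¹∧e² - e³∧e⁴)`, a horizontal 2-form
with `ω ωᵀ = 4` on `⟨e₁, …, e₄⟩`. Every nonzero Christoffel symbol then has exactly one index `0`,
and on horizontal indices `R_ijkl = -(2 ω_ij ω_kl + ω_ik ω_jl - ω_il ω_jk) / 4` and
`Ric = -ω ωᵀ / 2 = -2 g`, while `Ric₀₀ = |ω|² / 4 = 4`. So `s = -4` and the horizontal Weyl
tensor is `W_ijkl = R_ijkl + g_ik g_jl - g_il g_jk`.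

For the orientation `θ¹∧θ²∧θ⁴∧θ³` the form `ω` is self-dual, and `ω / 2` is a complex structure
fixing every anti-self-dual 2-form `α`. Hence `ω ⊗ ω` kills `α`, the term `ω_ik ω_jl - ω_il ω_jk`
maps `α` to `4 α` and `g_ik g_jl - g_il g_jk` maps it to `α`, so `W α = -α + α = 0`. The six
equations are the components of `W` on the basis `e¹²+e³⁴, e¹³-e²⁴, e¹⁴+e²³` of `Λ⁻`.
-/

namespace OrthonormalFrame

variable {ι : Type*}

noncomputable def christoffel (c : ι → ι → ι → ℝ) (k i j : ι) : ℝ :=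
  (1 / 2) * (c k j i + c k i j + c i j k)

noncomputable def riemann [Fintype ι] (c : ι → ι → ι → ℝ) (l k i j : ι) : ℝ :=
  (∑ m, (christoffel c m j k * christoffel c l i m - christoffel c m i k * christoffel c l j m))
    - ∑ m, c i j m * christoffel c l m k

noncomputable def ricci [Fintype ι] (c : ι → ι → ι → ℝ) (i j : ι) : ℝ := ∑ k, riemann c i k j k

noncomputable def scalarCurvature [Fintype ι] (c : ι → ι → ι → ℝ) : ℝ := ∑ i, ricci c i i

/-- Structure constants of `[e_i, e_j] = ω i j • e_z`. -/
def centralExtConst [DecidableEq ι] (ω : ι → ι → ℝ) (z i j k : ι) : ℝ :=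
  if k = z then ω i j else 0

theorem christoffel_centralExtConst [DecidableEq ι] (ω : ι → ι → ℝ) (z k i j : ι) :
    christoffel (centralExtConst ω z) k i j =
      ((if i = z then ω k j else 0) + (if j = z then ω k i else 0)
        + if k = z then ω i j else 0) / 2 := by
  simp only [christoffel, centralExtConst]
  ring

section CentralExtension

variable [Fintype ι] [DecidableEq ι] {ω : ι → ι → ℝ} {z : ι}

theorem riemann_centralExtConst_of_ne (hωz : ∀ i, ω i z = 0) (hzω : ∀ j, ω z j = 0)
    {l i j : ι} (hl : l ≠ z) (hi : i ≠ z) (hj : j ≠ z) (k : ι) :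
    riemann (centralExtConst ω z) l k i j =
      (ω l i * ω j k - ω l j * ω i k) / 4 - ω i j * ω l k / 2 := by
  simp [riemann, christoffel_centralExtConst, centralExtConst, add_div, ite_div, mul_add,
    ite_mul, mul_ite, sum_add_distrib, sum_ite_eq', hl, hi, hj, hωz, hzω]
  ring

theorem ricci_centralExtConst_of_ne (hωz : ∀ i, ω i z = 0) (hzω : ∀ j, ω z j = 0)
    (hanti : ∀ i j, ω j i = -ω i j) {i j : ι} (hi : i ≠ z) (hj : j ≠ z) :
    ricci (centralExtConst ω z) i j = -(∑ k, ω i k * ω j k) / 2 := by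
  have hdiag (k : ι) : ω k k = 0 := by linarith [hanti k k]
  have hterm (k : ι) : riemann (centralExtConst ω z) i k j k =
      (if k = z then (∑ m, ω i m * ω j m) / 4 else 0) - 3 / 4 * (ω i k * ω j k) := by
    by_cases hk : k = z
    · subst hk
      norm_num [riemann, christoffel_centralExtConst, centralExtConst, add_div, ite_div,
        div_mul_div_comm, hωz, hzω, hanti j, sum_div, neg_div, mul_comm]
    · rw [riemann_centralExtConst_of_ne hωz hzω hi hj hk, if_neg hk, hdiag]
      ring
  simp only [ricci, hterm, sum_sub_distrib, sum_ite_eq', mem_univ, if_true, ← mul_sum]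
  ring

theorem ricci_centralExtConst_center (hωz : ∀ i, ω i z = 0) (hzω : ∀ j, ω z j = 0)
    (hanti : ∀ i j, ω j i = -ω i j) :
    ricci (centralExtConst ω z) z z = (∑ k, ∑ m, ω k m ^ 2) / 4 := by
  have hterm (k : ι) : riemann (centralExtConst ω z) z k z k = (∑ m, ω k m ^ 2) / 4 := by
    norm_num [riemann, christoffel_centralExtConst, centralExtConst, add_div, ite_div,
      div_mul_div_comm, hωz, hzω]
    simp only [hanti k, neg_mul, neg_div, sum_neg_distrib, neg_neg, sq, sum_div]
  simp only [ricci, hterm, sum_div]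

theorem scalarCurvature_centralExtConst (hωz : ∀ i, ω i z = 0) (hzω : ∀ j, ω z j = 0)
    (hanti : ∀ i j, ω j i = -ω i j) :
    scalarCurvature (centralExtConst ω z) = -(∑ i, ∑ k, ω i k ^ 2) / 4 := by
  have hterm (i : ι) : ricci (centralExtConst ω z) i i =
      (if i = z then (∑ k, ∑ m, ω k m ^ 2) / 4 else 0) - (∑ k, ω i k ^ 2) / 2 := by
    by_cases hi : i = z
    · subst hi
      simp [ricci_centralExtConst_center hωz hzω hanti, hzω]
    · simp [ricci_centralExtConst_of_ne hωz hzω hanti hi hi, hi, sq, neg_div]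
  simp only [scalarCurvature, hterm, sum_sub_distrib, sum_ite_eq', mem_univ, if_true, ← sum_div]
  ring

end CentralExtension

end OrthonormalFrame

open OrthonormalFrame

def heisOmega (i j : Fin 5) : ℝ := heisC i j 0

theorem heisC_eq_centralExtConst : heisC = centralExtConst heisOmega 0 := by
  ext i j k
  by_cases hk : k = 0
  · simp [centralExtConst, heisOmega, hk]
  · simp [centralExtConst, heisC, hk]

theorem heisOmega_zero_right (i : Fin 5) : heisOmega i 0 = 0 := by
  simp [heisOmega, heisC]

theorem heisOmega_zero_left (j : Fin 5) : heisOmega 0 j = 0 := by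
  simp [heisOmega, heisC]

theorem heisOmega_antisymm (i j : Fin 5) : heisOmega j i = -heisOmega i j := by
  fin_cases i <;> fin_cases j <;> simp +decide [heisOmega, heisC]

theorem heisOmega_mul_transpose {i j : Fin 5} (hi : i ≠ 0) (hj : j ≠ 0) :
    ∑ k, heisOmega i k * heisOmega j k = 4 * heisDelta i j := by
  fin_cases i <;> fin_cases j <;> simp_all +decide [heisOmega, heisC, heisDelta] <;> norm_num

theorem heisOmega_sum_sq : ∑ i, ∑ k, heisOmega i k ^ 2 = 16 := by
  norm_num +decide [heisOmega, heisC, Fin.sum_univ_five]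

theorem heisRic_of_ne_zero {i j : Fin 5} (hi : i ≠ 0) (hj : j ≠ 0) :
    heisRic i j = -2 * heisDelta i j := by
  change ricci heisC i j = _
  rw [heisC_eq_centralExtConst, ricci_centralExtConst_of_ne heisOmega_zero_right heisOmega_zero_left
    heisOmega_antisymm hi hj, heisOmega_mul_transpose hi hj]
  ring

theorem heisS_eq : heisS = -4 := by
  change scalarCurvature heisC = _
  rw [heisC_eq_centralExtConst,
    scalarCurvature_centralExtConst heisOmega_zero_right heisOmega_zero_left heisOmega_antisymm,
    heisOmega_sum_sq]
  norm_num

theorem heisW_of_ne_zero {i j k l : Fin 5} (hi : i ≠ 0) (hj : j ≠ 0) (hk : k ≠ 0) (hl : l ≠ 0) :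
    heisW i j k l = (heisOmega i k * heisOmega l j - heisOmega i l * heisOmega k j) / 4
      - heisOmega k l * heisOmega i j / 2
      + (heisDelta i k * heisDelta j l - heisDelta i l * heisDelta j k) := by
  have hR : heisR i j k l = riemann (centralExtConst heisOmega 0) i j k l := by
    rw [← heisC_eq_centralExtConst]; rfl
  rw [heisW, hR, riemann_centralExtConst_of_ne heisOmega_zero_right heisOmega_zero_left hi hk hl,
    heisRic_of_ne_zero hj hk, heisRic_of_ne_zero hi hl, heisRic_of_ne_zero hi hk,
    heisRic_of_ne_zero hj hl, heisS_eq]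
  ring

/-- The anti-self-duality condition `W⁻₋ = 0` of the real slice of the Ren–Wang
spacetime (orientation making `θ¹∧θ²∧θ⁴∧θ³` positive): six component equations. -/
theorem heisenberg_weyl_anti_self_dual :
    heisW 1 2 1 2 + 2 * heisW 1 2 3 4 + heisW 3 4 3 4 = 0 ∧
    heisW 1 3 1 3 - 2 * heisW 1 3 2 4 + heisW 2 4 2 4 = 0 ∧
    heisW 1 4 1 4 + 2 * heisW 1 4 2 3 + heisW 2 3 2 3 = 0 ∧
    heisW 1 2 1 3 - heisW 1 2 2 4 + heisW 3 4 1 3 - heisW 3 4 2 4 = 0 ∧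
    heisW 1 2 1 4 + heisW 1 2 2 3 + heisW 3 4 1 4 + heisW 3 4 2 3 = 0 ∧
    heisW 1 3 1 4 + heisW 1 3 2 3 - heisW 2 4 1 4 - heisW 2 4 2 3 = 0 := by
  simp (disch := decide) only [heisW_of_ne_zero]
  norm_num +decide [heisOmega, heisC, heisDelta]
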